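/- arXiv:1401.8038 — 2 statements merged into one kernel-verified Lean document; each statement's English description precedes it below -/
import Mathlib

section
/- Lemma 1 (the Greedy-RP allocation scheme is monotone): fix a family of bids B and an index j whose bid is (d2, v2). If j ∈ W(B) (the bid is granted), then for every bundle d1 with d1 ≤ d2 pointwise and d1 nonzero, and every valuation v1 ≥ v2, replacing only bid j by (d1, v1) yields a family B' with j ∈ W(B'). Equivalently, a winning bid cannot lose by offering more money for fewer goods, and a losing bid cannot win by offering less money for more goods. -/
/-!
Raising the density of bid `j` while keeping all other bids only moves `j` earlier in the
greedy order, so the indices processed before `j` under `B'` form a prefix of those processed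
before `j` under `B`. The greedy pass only ever adds winners, so fewer resources are committed
when `j` is reached under `B'`; with the smaller bundle `d1` the resource constraint still holds,
and the reserve price constraint follows from `ô(d1) ≤ ô(d2) ≤ v2 ≤ v1`.
-/

open Classical Finset

noncomputable section

/-- A bundle: requested amounts of each of the `k` VM types. -/
abbrev Bundle (k : ℕ) := Fin k → ℕ

/-- A bid: a bundle together with a declared valuation. -/
abbrev Bid (k : ℕ) := Bundle k × ℝ

/-- A bundle is nonzero if some coordinate is positive. -/
def nonzeroBundle {k : ℕ} (d : Bundle k) : Prop := ∃ i, 0 < d i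

/-- A valid bid requests a nonzero bundle and declares a nonnegative valuation. -/
def validBid {k : ℕ} (b : Bid k) : Prop := nonzeroBundle b.1 ∧ 0 ≤ b.2

/-- The weighted bundle size `d̂(d) = Σ_i (d i)·(f i)`. -/
def dhat {k : ℕ} (f : Fin k → ℝ) (d : Bundle k) : ℝ := ∑ i, (d i : ℝ) * f i

/-- The bundle reserve price `ô(d) = Σ_i (d i)·(o i)`. -/
def ohat {k : ℕ} (o : Fin k → ℝ) (d : Bundle k) : ℝ := ∑ i, (d i : ℝ) * o i

/-- The bid density `e(d, v) = v / (d̂ d)^q`. -/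
def density {k : ℕ} (f : Fin k → ℝ) (q : ℝ) (b : Bid k) : ℝ := b.2 / (dhat f b.1) ^ q

/-- The indices of the active set `A`, sorted in non-increasing order of bid density;
`mergeSort` is stable and `A.sort (· ≤ ·)` lists indices increasingly, so ties are
broken by smaller index first. -/
def sortedBids {k n : ℕ} (f : Fin k → ℝ) (q : ℝ) (B : Fin n → Bid k) (A : Finset (Fin n)) :
    List (Fin n) :=
  (A.sort (· ≤ ·)).mergeSort (fun i j => decide (density f q (B j) ≤ density f q (B i)))

/-- Greedy-RP allocation scheme (GRP-A) run on the active index set `A`: process the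
indices in non-increasing density order and grant an index whenever both the available
resource constraint (ARC) and the reserve price constraint (RPC) hold. -/
def grants {k n : ℕ} (o f : Fin k → ℝ) (s : Fin k → ℕ) (q : ℝ) (B : Fin n → Bid k)
    (A : Finset (Fin n)) : Finset (Fin n) :=
  (sortedBids f q B A).foldl
    (fun W j =>
      if (∀ i, (B j).1 i + ∑ j' ∈ W, (B j').1 i ≤ s i) ∧ ohat o (B j).1 ≤ (B j).2
      then insert j W else W) ∅

/-- `W(B)`: the winners of GRP-A run on all bids. -/
def winners {k n : ℕ} (o f : Fin k → ℝ) (s : Fin k → ℕ) (q : ℝ) (B : Fin n → Bid k) :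
    Finset (Fin n) :=
  grants o f s q B Finset.univ

/-- `W'_j = W(B_{-j}) \ W(B)`: the new winners once bid `j` is removed. -/
def competitorSet {k n : ℕ} (o f : Fin k → ℝ) (s : Fin k → ℕ) (q : ℝ) (B : Fin n → Bid k)
    (j : Fin n) : Finset (Fin n) :=
  grants o f s q B (Finset.univ.erase j) \ winners o f s q B

/-- The competitor density `e_j^comp`: the maximum density over `W'_j`, or `0` if
`W'_j` is empty. -/
def ecomp {k n : ℕ} (o f : Fin k → ℝ) (s : Fin k → ℕ) (q : ℝ) (B : Fin n → Bid k)
    (j : Fin n) : ℝ :=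
  if h : (competitorSet o f s q B j).Nonempty
  then (competitorSet o f s q B j).sup' h (fun i => density f q (B i))
  else 0

/-- The bid-specific reserve density `e_res(b) = ô(d)/(d̂ d)^q`. -/
def eres {k : ℕ} (o f : Fin k → ℝ) (q : ℝ) (b : Bid k) : ℝ := ohat o b.1 / (dhat f b.1) ^ q

/-- Greedy-RP pricing scheme (GRP-P): a winner `j` pays
`p_j = max(e_j^comp, e_res(b_j)) · (d̂ d_j)^q`; a non-winner pays `0`. -/
def payment {k n : ℕ} (o f : Fin k → ℝ) (s : Fin k → ℕ) (q : ℝ) (B : Fin n → Bid k)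
    (j : Fin n) : ℝ :=
  if j ∈ winners o f s q B
  then max (ecomp o f s q B j) (eres o f q (B j)) * (dhat f (B j).1) ^ q
  else 0

namespace List

variable {α β : Type*}

theorem Nodup.not_sublist_swap {l : List α} {a b : α} (hl : l.Nodup) (h : [a, b] <+ l) :
    ¬ [b, a] <+ l := by
  induction l with
  | nil => simp at h
  | cons c t ih =>
    intro h'
    rw [nodup_cons] at hl
    rw [sublist_cons_iff] at h h'
    rcases h with h | ⟨_, ⟨rfl, rfl⟩, h⟩ <;> rcases h' with h' | ⟨_, ⟨rfl, rfl⟩, h'⟩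
    · exact ih hl.2 h h'
    · exact hl.1 (h.subset (by simp))
    · exact hl.1 (h'.subset (by simp))
    · exact hl.1 (h.subset (by simp))

theorem Pairwise.mergeSort_tiebreak {le : α → α → Bool}
    (trans : ∀ a b c, le a b → le b c → le a c) (total : ∀ a b, le a b || le b a)
    {R : α → α → Prop} {l : List α} (hl : l.Pairwise R) (hnd : l.Nodup) :
    (l.mergeSort le).Pairwise (fun a b => le a b ∧ (le b a → R a b)) := by
  have hsorted := pairwise_mergeSort trans total l
  have hnd' : (l.mergeSort le).Nodup := (mergeSort_perm l le).nodup_iff.2 hnd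
  have hcomparable : ∀ a ∈ l, ∀ b ∈ l, a ≠ b → R a b ∨ [b, a] <+ l :=
    hl.imp (R := R) (S := fun x y => x ≠ y → R x y ∨ [y, x] <+ l) (fun h _ => .inl h)
      |>.forall_of_forall_of_flip (fun x _ h => absurd rfl h)
        (pairwise_iff_forall_sublist.2 fun h _ => .inr h)
  rw [pairwise_iff_forall_sublist]
  intro a b hab
  refine ⟨pairwise_iff_forall_sublist.1 hsorted hab, fun hba => ?_⟩
  have hmem : ∀ x ∈ [a, b], x ∈ l := fun x hx => mem_mergeSort.1 (hab.subset hx)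
  have hne : a ≠ b := by simpa using hab.nodup hnd'
  refine (hcomparable a (hmem a (by simp)) b (hmem b (by simp)) hne).resolve_right fun h => ?_
  exact hnd'.not_sublist_swap hab (pair_sublist_mergeSort trans total hba h)

variable [LinearOrder β] {r : α → β}

theorem Pairwise.filter_lt_append_cons_filter_gt {l : List α} (hl : l.Pairwise (r · < r ·))
    {j : α} (hj : j ∈ l) :
    l.filter (r · < r j) ++ j :: l.filter (r j < r ·) = l := by
  obtain ⟨L, R, rfl⟩ := append_of_mem hj
  obtain ⟨-, hR, hLR⟩ := pairwise_append.1 hl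
  have hjR := (pairwise_cons.1 hR).1
  have hLj : ∀ x ∈ L, r x < r j := fun x hx => hLR x hx j mem_cons_self
  simp only [filter_append, filter_cons, lt_irrefl, decide_false]
  rw [filter_eq_self.2 (by simpa using hLj),
    filter_eq_nil_iff.2 (by simpa using fun x hx => (hjR x hx).le),
    filter_eq_nil_iff.2 (by simpa using fun x hx => (hLj x hx).le),
    filter_eq_self.2 (by simpa using hjR)]
  simp

theorem Pairwise.filter_lt_prefix {l : List α} (hl : l.Pairwise (r · < r ·)) {t t' : β}
    (h : t' ≤ t) : l.filter (r · < t') <+: l.filter (r · < t) := by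
  induction l with
  | nil => simp
  | cons a l ih =>
    obtain ⟨ha, hl⟩ := pairwise_cons.1 hl
    by_cases hat : r a < t'
    · rw [filter_cons_of_pos (by simpa using hat),
        filter_cons_of_pos (by simpa using hat.trans_le h)]
      exact (prefix_cons_inj a).2 (ih hl)
    · rw [filter_eq_nil_iff.2 ?_]
      · exact nil_prefix
      · simp only [mem_cons, decide_eq_true_eq, forall_eq_or_imp]
        exact ⟨hat, fun x hx hxt => hat ((ha x hx).trans hxt)⟩

end List

section BundleSize

variable {k : ℕ} {f o : Fin k → ℝ}

theorem dhat_pos (hf : ∀ i, 0 < f i) {d : Bundle k} (hd : nonzeroBundle d) : 0 < dhat f d := by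
  obtain ⟨i, hi⟩ := hd
  exact sum_pos' (fun i _ => mul_nonneg (Nat.cast_nonneg _) (hf i).le)
    ⟨i, mem_univ i, mul_pos (by exact_mod_cast hi) (hf i)⟩

theorem dhat_mono (hf : ∀ i, 0 ≤ f i) {d d' : Bundle k} (h : d ≤ d') : dhat f d ≤ dhat f d' :=
  sum_le_sum fun i _ => mul_le_mul_of_nonneg_right (by exact_mod_cast h i) (hf i)

theorem ohat_nonneg (ho : ∀ i, 0 ≤ o i) (d : Bundle k) : 0 ≤ ohat o d :=
  sum_nonneg fun i _ => mul_nonneg (Nat.cast_nonneg _) (ho i)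

theorem ohat_mono (ho : ∀ i, 0 ≤ o i) {d d' : Bundle k} (h : d ≤ d') : ohat o d ≤ ohat o d' :=
  sum_le_sum fun i _ => mul_le_mul_of_nonneg_right (by exact_mod_cast h i) (ho i)

theorem density_le_density (hf : ∀ i, 0 < f i) {q : ℝ} (hq : 0 ≤ q) {d d' : Bundle k}
    {v v' : ℝ} (hd : nonzeroBundle d) (hdd : d ≤ d') (hv : v' ≤ v) (hv0 : 0 ≤ v) :
    density f q (d', v') ≤ density f q (d, v) := by
  have hpos : 0 < dhat f d := dhat_pos hf hd
  exact div_le_div₀ hv0 hv (Real.rpow_pos_of_pos hpos q)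
    (Real.rpow_le_rpow hpos.le (dhat_mono (fun i => (hf i).le) hdd) hq)

end BundleSize

section Greedy

variable {k n : ℕ} (o : Fin k → ℝ) (s : Fin k → ℕ)

-- Reducible, so that `if grantable …` decides by the same instance as the test inside `grants`.
abbrev grantable (B : Fin n → Bid k) (W : Finset (Fin n)) (j : Fin n) : Prop :=
  (∀ i, (B j).1 i + ∑ j' ∈ W, (B j').1 i ≤ s i) ∧ ohat o (B j).1 ≤ (B j).2

def greedyStep (B : Fin n → Bid k) (W : Finset (Fin n)) (j : Fin n) : Finset (Fin n) :=
  if grantable o s B W j then insert j W else W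

theorem grants_eq_foldl (f : Fin k → ℝ) (q : ℝ) (B : Fin n → Bid k) (A : Finset (Fin n)) :
    grants o f s q B A = (sortedBids f q B A).foldl (greedyStep o s B) ∅ :=
  rfl

variable {o s}

theorem subset_foldl_greedyStep (B : Fin n → Bid k) :
    ∀ (L : List (Fin n)) (W : Finset (Fin n)), W ⊆ L.foldl (greedyStep o s B) W
  | [], _ => subset_rfl
  | a :: L, W => by
    refine (?_ : W ⊆ greedyStep o s B W a).trans (subset_foldl_greedyStep B L _)
    unfold greedyStep
    split_ifs
    exacts [subset_insert a W, subset_rfl]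

theorem foldl_greedyStep_subset_of_prefix {B : Fin n → Bid k} {L₁ L₂ : List (Fin n)}
    (h : L₁ <+: L₂) (W : Finset (Fin n)) :
    L₁.foldl (greedyStep o s B) W ⊆ L₂.foldl (greedyStep o s B) W := by
  obtain ⟨M, rfl⟩ := h
  rw [List.foldl_append]
  exact subset_foldl_greedyStep B M _

theorem mem_foldl_greedyStep {B : Fin n → Bid k} {L : List (Fin n)} {W : Finset (Fin n)}
    {x : Fin n} (h : x ∈ L.foldl (greedyStep o s B) W) : x ∈ W ∨ x ∈ L := by
  induction L generalizing W with
  | nil => exact .inl h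
  | cons a L ih =>
    rcases ih h with h | h
    · unfold greedyStep at h
      split_ifs at h
      · rcases mem_insert.1 h with rfl | h
        exacts [.inr List.mem_cons_self, .inl h]
      · exact .inl h
    · exact .inr (List.mem_cons_of_mem a h)

theorem foldl_greedyStep_congr {B B' : Fin n → Bid k} :
    ∀ {L : List (Fin n)} {W : Finset (Fin n)}, (∀ i ∈ L, B' i = B i) → (∀ i ∈ W, B' i = B i) →
      L.foldl (greedyStep o s B') W = L.foldl (greedyStep o s B) W
  | [], _, _, _ => rfl
  | a :: L, W, hL, hW => by
    have hagree : ∀ i ∈ insert a W, B' i = B i := by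
      simpa [hL a List.mem_cons_self] using hW
    have hstep : greedyStep o s B' W a = greedyStep o s B W a := by
      have hsum : ∀ i, ∑ j' ∈ W, (B' j').1 i = ∑ j' ∈ W, (B j').1 i := fun i =>
        sum_congr rfl fun x hx => by rw [hW x hx]
      simp only [greedyStep, grantable, hL a List.mem_cons_self, hsum]
    have hW' : ∀ i ∈ greedyStep o s B W a, B' i = B i := by
      unfold greedyStep
      split_ifs
      exacts [hagree, hW]
    rw [List.foldl_cons, List.foldl_cons, hstep]
    exact foldl_greedyStep_congr (fun i hi => hL i (List.mem_cons_of_mem a hi)) hW'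

theorem mem_foldl_greedyStep_append_cons_iff {B : Fin n → Bid k} {L R : List (Fin n)}
    {j : Fin n} (hL : j ∉ L) (hR : j ∉ R) :
    j ∈ (L ++ j :: R).foldl (greedyStep o s B) ∅ ↔
      grantable o s B (L.foldl (greedyStep o s B) ∅) j := by
  set W := L.foldl (greedyStep o s B) ∅
  have hW : j ∉ W := fun h => (mem_foldl_greedyStep h).elim (notMem_empty j) hL
  rw [List.foldl_append, List.foldl_cons]
  constructor
  · intro h
    by_contra hj
    rw [greedyStep, if_neg hj] at h
    exact (mem_foldl_greedyStep h).elim hW hR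
  · intro hj
    rw [greedyStep, if_pos hj]
    exact subset_foldl_greedyStep B R _ (mem_insert_self j W)

theorem grantable_of_le (ho : ∀ i, 0 ≤ o i) {B B' : Fin n → Bid k} {W W' : Finset (Fin n)}
    {j : Fin n} (h : grantable o s B W j) (hW : W' ⊆ W) (hagree : ∀ i ∈ W', B' i = B i)
    (hd : (B' j).1 ≤ (B j).1) (hv : (B j).2 ≤ (B' j).2) : grantable o s B' W' j := by
  refine ⟨fun i => ?_, (ohat_mono ho hd).trans (h.2.trans hv)⟩
  have hsum : ∑ j' ∈ W', (B' j').1 i ≤ ∑ j' ∈ W, (B j').1 i := by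
    rw [sum_congr rfl fun x hx => congrArg (fun b : Bid k => b.1 i) (hagree x hx)]
    exact sum_le_sum_of_subset hW
  have hdi : (B' j).1 i ≤ (B j).1 i := hd i
  have harc := h.1 i
  omega

end Greedy

section Ranking

variable {k n : ℕ}

/-- GRP-A's processing order as a linear order: `sortedBids` lists indices by increasing rank,
i.e. by decreasing density with ties broken by smaller index. -/
def densityRank (f : Fin k → ℝ) (q : ℝ) (B : Fin n → Bid k) (i : Fin n) : ℝᵒᵈ ×ₗ Fin n :=
  toLex (OrderDual.toDual (density f q (B i)), i)

variable {f : Fin k → ℝ} {q : ℝ}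

theorem mem_sortedBids {B : Fin n → Bid k} {A : Finset (Fin n)} {i : Fin n} :
    i ∈ sortedBids f q B A ↔ i ∈ A := by
  simp [sortedBids]

theorem pairwise_sortedBids (B : Fin n → Bid k) (A : Finset (Fin n)) :
    (sortedBids f q B A).Pairwise (densityRank f q B · < densityRank f q B ·) := by
  refine ((A.sortedLT_sort.pairwise).mergeSort_tiebreak ?_ ?_ (A.sort_nodup _)).imp ?_
  · intro a b c hab hbc
    simp only [decide_eq_true_eq] at *
    exact hbc.trans hab
  · intro a b
    simpa using le_total _ _
  · intro a b ⟨hab, hba⟩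
    simp only [decide_eq_true_eq] at hab hba
    simp only [densityRank, Prod.Lex.toLex_lt_toLex, OrderDual.toDual_lt_toDual,
      OrderDual.toDual_inj]
    rcases hab.lt_or_eq with hlt | heq
    exacts [.inl hlt, .inr ⟨heq.symm, hba heq.ge⟩]

theorem densityRank_congr {B B' : Fin n → Bid k} {i : Fin n} (h : B' i = B i) :
    densityRank f q B' i = densityRank f q B i := by
  rw [densityRank, densityRank, h]

theorem densityRank_le_of_density_le {B B' : Fin n → Bid k} {j : Fin n}
    (h : density f q (B j) ≤ density f q (B' j)) :
    densityRank f q B' j ≤ densityRank f q B j :=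
  Prod.Lex.toLex_le_toLex.2 <|
    h.lt_or_eq.imp OrderDual.toDual_lt_toDual.2 fun h => ⟨h.symm, le_rfl⟩

end Ranking

section GrantedBefore

variable {k n : ℕ} {o f : Fin k → ℝ} {s : Fin k → ℕ} {q : ℝ}

variable (o f s q) in
def grantedBefore (B : Fin n → Bid k) (A : Finset (Fin n)) (j : Fin n) : Finset (Fin n) :=
  ((sortedBids f q B A).filter (densityRank f q B · < densityRank f q B j)).foldl
    (greedyStep o s B) ∅

theorem ne_of_mem_grantedBefore {B : Fin n → Bid k} {A : Finset (Fin n)} {i j : Fin n}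
    (h : i ∈ grantedBefore o f s q B A j) : i ≠ j := by
  rintro rfl
  rcases mem_foldl_greedyStep h with h | h
  · exact notMem_empty i h
  · simp at h

theorem mem_grants_iff {B : Fin n → Bid k} {A : Finset (Fin n)} {j : Fin n} :
    j ∈ grants o f s q B A ↔ j ∈ A ∧ grantable o s B (grantedBefore o f s q B A j) j := by
  by_cases hj : j ∈ A
  · have hsplit := (pairwise_sortedBids (f := f) (q := q) B A).filter_lt_append_cons_filter_gt
      (mem_sortedBids.2 hj)
    rw [grants_eq_foldl, ← hsplit, mem_foldl_greedyStep_append_cons_iff (by simp) (by simp)]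
    exact (and_iff_right hj).symm
  · refine iff_of_false (fun h => ?_) (fun h => hj h.1)
    rw [grants_eq_foldl] at h
    exact (mem_foldl_greedyStep h).elim (notMem_empty j) (hj ∘ mem_sortedBids.1)

theorem grantedBefore_subset {B B' : Fin n → Bid k} {A : Finset (Fin n)} {j : Fin n}
    (hsame : ∀ i, i ≠ j → B' i = B i) (hdens : density f q (B j) ≤ density f q (B' j)) :
    grantedBefore o f s q B' A j ⊆ grantedBefore o f s q B A j := by
  set r := densityRank f q B
  set r' := densityRank f q B'
  have hrj : r' j ≤ r j := densityRank_le_of_density_le hdens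
  have hne : ∀ {i}, r i < r' j → i ≠ j := by
    rintro i hi rfl
    exact hi.not_ge hrj
  have hr : ∀ {i}, r i < r' j → r' i = r i := fun hi => densityRank_congr (hsame _ (hne hi))
  have hpred : (fun i => decide (r' i < r' j)) = (fun i => decide (r i < r' j)) := by
    funext i
    rcases eq_or_ne i j with rfl | hij
    · simp [hrj.not_gt]
    · rw [show r' i = r i from densityRank_congr (hsame i hij)]
  have hfilter : (sortedBids f q B' A).filter (r' · < r' j) =
      (sortedBids f q B A).filter (r · < r' j) := by
    rw [hpred]
    refine List.Perm.eq_of_pairwise (le := (r · < r ·))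
      (fun a b _ _ hab hba => absurd (hab.trans hba) (lt_irrefl _)) ?_
      ((pairwise_sortedBids B A).filter _) ?_
    · refine ((pairwise_sortedBids B' A).filter _).imp_of_mem fun ha hb hab => ?_
      simp only [List.mem_filter, decide_eq_true_eq] at ha hb
      rwa [← hr ha.2, ← hr hb.2]
    · exact ((List.mergeSort_perm _ _).trans (List.mergeSort_perm _ _).symm).filter _
  calc grantedBefore o f s q B' A j
      = ((sortedBids f q B A).filter (r · < r' j)).foldl (greedyStep o s B') ∅ := by
        rw [grantedBefore, hfilter]
    _ = ((sortedBids f q B A).filter (r · < r' j)).foldl (greedyStep o s B) ∅ :=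
        foldl_greedyStep_congr
          (fun i hi => hsame i (hne (by simpa using (List.mem_filter.1 hi).2))) (by simp)
    _ ⊆ grantedBefore o f s q B A j :=
        foldl_greedyStep_subset_of_prefix ((pairwise_sortedBids B A).filter_lt_prefix hrj) ∅

end GrantedBefore

theorem grpA_monotone_general {k n : ℕ}
    (f o : Fin k → ℝ) (hf : ∀ i, 0 < f i) (ho : ∀ i, 0 ≤ o i)
    (s : Fin k → ℕ) (q : ℝ) (hq : 0 < q)
    (B B' : Fin n → Bid k) (j : Fin n)
    (d1 : Bundle k) (v1 : ℝ) (hd1 : nonzeroBundle d1)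
    (hd : d1 ≤ (B j).1) (hv : (B j).2 ≤ v1)
    (hB'j : B' j = (d1, v1)) (hsame : ∀ i, i ≠ j → B' i = B i)
    (hwin : j ∈ winners o f s q B) :
    j ∈ winners o f s q B' := by
  rw [winners, mem_grants_iff] at hwin ⊢
  obtain ⟨hj, hgrant⟩ := hwin
  have hv1 : 0 ≤ v1 := (ohat_nonneg ho _).trans (hgrant.2.trans hv)
  have hdens : density f q (B j) ≤ density f q (B' j) := by
    rw [hB'j]
    exact density_le_density hf hq.le hd1 hd hv hv1
  exact ⟨hj, grantable_of_le ho hgrant (grantedBefore_subset hsame hdens)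
    (fun i hi => hsame i (ne_of_mem_grantedBefore hi)) (by rwa [hB'j]) (by rwa [hB'j])⟩

/-- Lemma 1, the Greedy-RP allocation scheme is monotone: if the bid
`(d2, v2)` of index `j` is granted by GRP-A on `B`, then replacing only bid `j` by
`(d1, v1)` with `d1 ≤ d2` pointwise, `d1` nonzero and `v1 ≥ v2` yields a family `B'`
on which `j` is still granted. -/
theorem grpA_monotone {k n : ℕ} (hk : 1 ≤ k)
    (f o : Fin k → ℝ) (hf : ∀ i, 0 < f i) (ho : ∀ i, 0 ≤ o i)
    (s : Fin k → ℕ) (q : ℝ) (hq : 0 < q)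
    (B B' : Fin n → Bid k) (j : Fin n)
    (hB : ∀ i, validBid (B i))
    (d1 : Bundle k) (v1 : ℝ) (hd1 : nonzeroBundle d1)
    (hd : d1 ≤ (B j).1) (hv : (B j).2 ≤ v1)
    (hB'j : B' j = (d1, v1)) (hsame : ∀ i, i ≠ j → B' i = B i)
    (hwin : j ∈ winners o f s q B) :
    j ∈ winners o f s q B' :=
  grpA_monotone_general f o hf ho s q hq B B' j d1 v1 hd1 hd hv hB'j hsame hwin
end
end

section
/- Removing a winner only promotes lower-density bids: for every family of bids B and every winner j ∈ W(B), every index i ≠ j that precedes j in the density-sorted order of B receives the same grant decision under GRP-A applied to B as under GRP-A applied to B_{-j} (B with bid j removed); consequently every index in W(B_{-j}) \ W(B) has density at most e(b_j), and hence the competitor density e_j^comp satisfies e_j^comp ≤ e(b_j). -/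
/-!
GRP-A is a left fold over the bids sorted by non-increasing density, and its step can only
add the index being processed. Since the merge sort is stable and its input lists indices
increasingly, the sorted list is strictly ordered by the key (density descending, index
ascending); so sorting `B_{-j}` merely deletes `j` from the sorted list of `B`. An index
before `j` therefore sees the same prefix, hence gets the same decision, in both runs. An
index that wins only once `j` is removed must come after `j`, so its density is at most
`e(b_j)`, and so is their maximum `e_j^comp` (or `0 ≤ e(b_j)` if there is none).
-/

open Classical Finset

noncomputable section

theorem List.Pairwise.rel_of_idxOf_lt {ι : Type*} [BEq ι] [LawfulBEq ι] {R : ι → ι → Prop}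
    {l : List ι} (h : l.Pairwise R) {a b : ι} (ha : a ∈ l) (hb : b ∈ l)
    (hab : l.idxOf a < l.idxOf b) : R a b := by
  simpa only [List.getElem_idxOf] using List.pairwise_iff_getElem.mp h _ _
    (List.idxOf_lt_length_iff.mpr ha) (List.idxOf_lt_length_iff.mpr hb) hab

theorem List.Nodup.eq_of_pair_sublist_of_pair_sublist {ι : Type*} {l : List ι} {a b : ι}
    (hl : l.Nodup) (hab : [a, b].Sublist l) (hba : [b, a].Sublist l) : a = b := by
  induction l with
  | nil => simp at hab
  | cons c t ih =>
    rw [List.nodup_cons] at hl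
    cases hab with
    | cons _ hab =>
      cases hba with
      | cons _ hba => exact ih hl.2 hab hba
      | cons_cons _ _ => exact absurd (hab.mem (by simp)) hl.1
    | cons_cons _ _ =>
      cases hba with
      | cons _ hba => exact absurd (hba.mem (by simp)) hl.1
      | cons_cons _ _ => rfl

section StableSort

variable {ι α : Type*} [LinearOrder ι] [LinearOrder α] (e : ι → α)

def descKey (a : ι) : αᵒᵈ ×ₗ ι := toLex (OrderDual.toDual (e a), a)

lemma descKey_lt_descKey {a b : ι} :
    descKey e a < descKey e b ↔ e b < e a ∨ e a = e b ∧ a < b := by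
  simp [descKey, Prod.Lex.toLex_lt_toLex]

lemma pairwise_descKey_mergeSort_sort (A : Finset ι) :
    ((A.sort (· ≤ ·)).mergeSort (fun i j => decide (e j ≤ e i))).Pairwise
      (fun a b => descKey e a < descKey e b) := by
  set le : ι → ι → Bool := fun i j => decide (e j ≤ e i) with hle
  have trans : ∀ a b c, le a b → le b c → le a c := by
    simp only [hle, decide_eq_true_eq]
    exact fun a b c hab hbc => hbc.trans hab
  have total : ∀ a b, le a b || le b a := by simp [hle, le_total]
  have hnodup : ((A.sort (· ≤ ·)).mergeSort le).Nodup :=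
    (List.mergeSort_perm _ _).nodup_iff.mpr (Finset.sort_nodup _ _)
  rw [List.pairwise_iff_forall_sublist]
  intro a b hab
  have hba : e b ≤ e a := by
    simpa [hle] using
      List.pairwise_iff_forall_sublist.mp (List.pairwise_mergeSort trans total _) hab
  rw [descKey_lt_descKey]
  refine hba.lt_or_eq.imp id fun htie => ⟨htie.symm, ?_⟩
  have hne : a ≠ b := by simpa using hnodup.sublist hab
  by_contra! hba'
  -- Otherwise `[b, a]` is a sublist of the index-sorted input, and stability keeps it in order.
  have hmem : ∀ x ∈ [a, b], x ∈ A := fun x hx => by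
    simpa [List.mem_mergeSort] using hab.subset hx
  have hsort : [b, a].Sublist (A.sort (· ≤ ·)) :=
    List.sublist_of_subperm_of_pairwise
      (List.subperm_of_subset (by simpa using hne.symm) (by simp [hmem]))
      (by simpa using hba') (Finset.pairwise_sort A _)
  exact hne (hnodup.eq_of_pair_sublist_of_pair_sublist hab
    (List.pair_sublist_mergeSort trans total (by simp [hle, htie]) hsort))

lemma mergeSort_sort_erase (A : Finset ι) (a : ι) :
    ((A.erase a).sort (· ≤ ·)).mergeSort (fun i j => decide (e j ≤ e i)) =
      ((A.sort (· ≤ ·)).mergeSort (fun i j => decide (e j ≤ e i))).erase a := by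
  have : Std.Irrefl (fun a b => descKey e a < descKey e b) := ⟨fun _ => lt_irrefl _⟩
  have : Std.Antisymm (fun a b => descKey e a < descKey e b) :=
    ⟨fun _ _ h h' => (lt_asymm h h').elim⟩
  refine (pairwise_descKey_mergeSort_sort e _).eq_of_mem_iff
    ((pairwise_descKey_mergeSort_sort e A).sublist List.erase_sublist) fun x => ?_
  rw [((List.mergeSort_perm _ _).nodup_iff.mpr (Finset.sort_nodup _ _)).mem_erase_iff]
  simp [List.mem_mergeSort]

end StableSort

section InsertingFold

variable {ι : Type*} [DecidableEq ι] {g : Finset ι → ι → Finset ι}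

lemma mem_foldl_iff_of_notMem (hg : ∀ W x, g W x = W ∨ g W x = insert x W)
    {l : List ι} {W : Finset ι} {i : ι} (hi : i ∉ l) : i ∈ l.foldl g W ↔ i ∈ W := by
  induction l generalizing W with
  | nil => rfl
  | cons c t ih =>
    rw [List.mem_cons, not_or] at hi
    rw [List.foldl_cons, ih hi.2]
    rcases hg W c with h | h <;> simp [h, hi.1]

lemma mem_foldl_erase_iff (hg : ∀ W x, g W x = W ∨ g W x = insert x W)
    {l : List ι} (hl : l.Nodup) {W : Finset ι} {i j : ι}
    (hlt : l.idxOf i < l.idxOf j) : i ∈ (l.erase j).foldl g W ↔ i ∈ l.foldl g W := by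
  induction l generalizing W with
  | nil => simp at hlt
  | cons c t ih =>
    rw [List.nodup_cons] at hl
    have hcj : c ≠ j := by rintro rfl; simp at hlt
    rw [List.erase_cons_tail (by simpa using hcj), List.foldl_cons, List.foldl_cons]
    by_cases hic : i = c
    · subst hic
      rw [mem_foldl_iff_of_notMem hg (fun h => hl.1 (List.mem_of_mem_erase h)),
        mem_foldl_iff_of_notMem hg hl.1]
    · rw [List.idxOf_cons_ne _ (Ne.symm hic), List.idxOf_cons_ne _ hcj] at hlt
      exact ih hl.2 (Nat.succ_lt_succ_iff.mp hlt)

end InsertingFold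

section GreedyRP

variable {k n : ℕ} (o f : Fin k → ℝ) (s : Fin k → ℕ) (q : ℝ) (B : Fin n → Bid k)

def grantStep (W : Finset (Fin n)) (j : Fin n) : Finset (Fin n) :=
  if (∀ i, (B j).1 i + ∑ j' ∈ W, (B j').1 i ≤ s i) ∧ ohat o (B j).1 ≤ (B j).2
  then insert j W else W

lemma grantStep_eq_or (W : Finset (Fin n)) (j : Fin n) :
    grantStep o s B W j = W ∨ grantStep o s B W j = insert j W :=
  (ite_eq_or_eq _ _ _).symm

lemma sortedBids_nodup (A : Finset (Fin n)) : (sortedBids f q B A).Nodup :=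
  (List.mergeSort_perm _ _).nodup_iff.mpr (Finset.sort_nodup _ _)

lemma mem_sortedBids_univ (i : Fin n) : i ∈ sortedBids f q B Finset.univ := by
  simp [sortedBids, List.mem_mergeSort]

lemma grants_erase (A : Finset (Fin n)) (j : Fin n) :
    grants o f s q B (A.erase j) = ((sortedBids f q B A).erase j).foldl (grantStep o s B) ∅ :=
  congrArg (List.foldl _ ∅) (mergeSort_sort_erase (fun i => density f q (B i)) A j)

lemma mem_winners_iff_mem_grants_erase {i j : Fin n}
    (hlt : (sortedBids f q B Finset.univ).idxOf i < (sortedBids f q B Finset.univ).idxOf j) :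
    i ∈ winners o f s q B ↔ i ∈ grants o f s q B (Finset.univ.erase j) := by
  rw [grants_erase, mem_foldl_erase_iff (grantStep_eq_or o s B) (sortedBids_nodup f q B _) hlt]
  rfl

lemma density_le_of_mem_competitorSet {i j : Fin n} (hi : i ∈ competitorSet o f s q B j) :
    density f q (B i) ≤ density f q (B j) := by
  set l := sortedBids f q B Finset.univ
  rw [competitorSet, Finset.mem_sdiff] at hi
  obtain ⟨hi_grant, hi_lose⟩ := hi
  have hij : i ≠ j := by
    rintro rfl
    rw [grants_erase, mem_foldl_iff_of_notMem (grantStep_eq_or o s B)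
      ((sortedBids_nodup f q B _).not_mem_erase)] at hi_grant
    exact Finset.notMem_empty i hi_grant
  have hji : l.idxOf j < l.idxOf i := by
    refine lt_of_le_of_ne (not_lt.mp fun hlt => hi_lose ?_) ?_
    · exact (mem_winners_iff_mem_grants_erase o f s q B hlt).mpr hi_grant
    · exact fun h => hij ((List.idxOf_inj (mem_sortedBids_univ f q B j)).mp h).symm
  have hkey := (pairwise_descKey_mergeSort_sort (fun i => density f q (B i)) _).rel_of_idxOf_lt
    (mem_sortedBids_univ f q B j) (mem_sortedBids_univ f q B i) hji
  rcases (descKey_lt_descKey _).mp hkey with h | ⟨h, -⟩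
  exacts [h.le, h.ge]

lemma density_nonneg {b : Bid k} (hf : ∀ i, 0 ≤ f i) (hb : 0 ≤ b.2) : 0 ≤ density f q b :=
  div_nonneg hb <| Real.rpow_nonneg
    (Finset.sum_nonneg fun i _ => mul_nonneg (Nat.cast_nonneg _) (hf i)) q

lemma ecomp_le_density (hf : ∀ i, 0 ≤ f i) (j : Fin n) (hj : 0 ≤ (B j).2) :
    ecomp o f s q B j ≤ density f q (B j) := by
  rw [ecomp]
  split_ifs with h
  · exact Finset.sup'_le h _ fun i hi => density_le_of_mem_competitorSet o f s q B hi
  · exact density_nonneg f q hf hj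

end GreedyRP

theorem remove_winner_promotes_lower_density_general {k n : ℕ}
    (f o : Fin k → ℝ) (hf : ∀ i, 0 < f i)
    (s : Fin k → ℕ) (q : ℝ)
    (B : Fin n → Bid k) (hB : ∀ i, validBid (B i))
    (j : Fin n) :
    (∀ i, i ≠ j →
        (sortedBids f q B Finset.univ).idxOf i < (sortedBids f q B Finset.univ).idxOf j →
        (i ∈ winners o f s q B ↔ i ∈ grants o f s q B (Finset.univ.erase j))) ∧
    (∀ i ∈ competitorSet o f s q B j, density f q (B i) ≤ density f q (B j)) ∧
    ecomp o f s q B j ≤ density f q (B j) :=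
  ⟨fun _ _ hlt => mem_winners_iff_mem_grants_erase o f s q B hlt,
    fun _ hi => density_le_of_mem_competitorSet o f s q B hi,
    ecomp_le_density o f s q B (fun i => (hf i).le) j (hB j).2⟩

/-- removing a winner only promotes lower-density bids. For a winner
`j ∈ W(B)`: (a) every index `i ≠ j` preceding `j` in the density-sorted order of `B`
receives the same grant decision under GRP-A applied to `B` as under GRP-A applied to
`B_{-j}` (`B` with bid `j` removed); (b) consequently every index in
`W(B_{-j}) \ W(B)` has density at most `e(b_j)`; and (c) the competitor density
satisfies `e_j^comp ≤ e(b_j)`. -/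
theorem remove_winner_promotes_lower_density {k n : ℕ} (hk : 1 ≤ k)
    (f o : Fin k → ℝ) (hf : ∀ i, 0 < f i) (ho : ∀ i, 0 ≤ o i)
    (s : Fin k → ℕ) (q : ℝ) (hq : 0 < q)
    (B : Fin n → Bid k) (hB : ∀ i, validBid (B i))
    (j : Fin n) (hwin : j ∈ winners o f s q B) :
    (∀ i, i ≠ j →
        (sortedBids f q B Finset.univ).idxOf i < (sortedBids f q B Finset.univ).idxOf j →
        (i ∈ winners o f s q B ↔ i ∈ grants o f s q B (Finset.univ.erase j))) ∧
    (∀ i ∈ competitorSet o f s q B j, density f q (B i) ≤ density f q (B j)) ∧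
    ecomp o f s q B j ≤ density f q (B j) :=
  remove_winner_promotes_lower_density_general f o hf s q B hB j

end
end
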